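/- Assume g satisfies conditions (A1)–(A3) on (a,b), let F be the distribution function with density p(y) = c₁ e^{−G(y)} on (a,b), and for z ∈ (a,b) let f_z be the Stein solution defined by f_z(w) = F(w)(1 − F(z))/p(w) for w ≤ z and f_z(w) = F(z)(1 − F(w))/p(w) for w > z. Then the function w ↦ g(w) f_z(w) is non-decreasing on (a,b). -/

import Mathlib

open MeasureTheory Filter Set

/-- The open interval `(a, b) ⊆ ℝ` determined by extended-real endpoints. -/
def strip (a b : EReal) : Set ℝ := {x : ℝ | a < (x : EReal) ∧ (x : EReal) < b}

/-- The density `p(y) = c₁ e^{-G(y)}`, `G(y) = ∫_{w₀}^y g`. -/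
noncomputable def steinPdf (g : ℝ → ℝ) (w₀ c₁ : ℝ) (y : ℝ) : ℝ :=
  c₁ * Real.exp (-(∫ t in w₀..y, g t))

/-- The distribution function `F` with density `p` on `(a, b)`. -/
noncomputable def steinCDF (g : ℝ → ℝ) (a b : EReal) (w₀ c₁ : ℝ) (w : ℝ) : ℝ :=
  ∫ y in strip a b ∩ Set.Iic w, steinPdf g w₀ c₁ y

/-- The Stein solution `f_z`: `f_z(w) = F(w)(1-F(z))/p(w)` for `w ≤ z`, and
`f_z(w) = F(z)(1-F(w))/p(w)` for `w > z`. -/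
noncomputable def steinSol (g : ℝ → ℝ) (a b : EReal) (w₀ c₁ : ℝ) (z w : ℝ) : ℝ :=
  if w ≤ z then steinCDF g a b w₀ c₁ w * (1 - steinCDF g a b w₀ c₁ z) / steinPdf g w₀ c₁ w
  else steinCDF g a b w₀ c₁ z * (1 - steinCDF g a b w₀ c₁ w) / steinPdf g w₀ c₁ w

/-! If `p' = -g p` and `K' = s p`, then `(g K / p)' = N / p` with `N = (g' + g²) K + s g p`.
On either side of `z`, `g f_z` is a nonnegative multiple of `g K / p` for `(K, s) = (F, 1)` or
`(1 - F, -1)`, so it suffices that `N ≥ 0`. Now `N ≥ s g p` because `g' ≥ 0`, and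
`(N / g²)' = K (g g'' - 2 g'²) / g³` has the sign of `-g` by (A2). If `g w < 0`, then `g < 0` and
`g²` grows on `(a, w]`, so `N(w) < 0` would force `N ≤ N(w) < 0` on `(a, w]`, contradicting
`s g p → 0` at `a` (A3); the case `g w > 0` is the mirror image at `b`. -/

open Topology

lemma isOpen_strip (a b : EReal) : IsOpen (strip a b) :=
  isOpen_Ioo.preimage continuous_coe_real_ereal

lemma ordConnected_strip (a b : EReal) : OrdConnected (strip a b) :=
  ordConnected_Ioo.preimage_mono EReal.coe_strictMono.monotone

section StripEnds

variable {a b : EReal} {w : ℝ}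

lemma comap_coe_nhdsGT_neBot (h : a < w) : (comap ((↑) : ℝ → EReal) (𝓝[>] a)).NeBot := by
  have := nhdsGT_neBot_of_exists_gt ⟨_, h⟩
  refine comap_neBot_iff_frequently.2 (Eventually.frequently ?_)
  filter_upwards [Ioo_mem_nhdsGT h] with y hy
  exact ⟨y.toReal,
    EReal.coe_toReal (hy.2.trans (EReal.coe_lt_top w)).ne (hy.1.trans_le' bot_le).ne'⟩

lemma comap_coe_nhdsLT_neBot (h : (w : EReal) < b) :
    (comap ((↑) : ℝ → EReal) (𝓝[<] b)).NeBot := by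
  have := nhdsLT_neBot_of_exists_lt ⟨_, h⟩
  refine comap_neBot_iff_frequently.2 (Eventually.frequently ?_)
  filter_upwards [Ioo_mem_nhdsLT h] with y hy
  exact ⟨y.toReal, EReal.coe_toReal (hy.2.trans_le le_top).ne (hy.1.trans_le' bot_le).ne'⟩

lemma eventually_comap_coe_nhdsGT_mem_strip (hw : w ∈ strip a b) :
    ∀ᶠ x in comap ((↑) : ℝ → EReal) (𝓝[>] a), x ∈ strip a b ∩ Iic w := by
  filter_upwards [preimage_mem_comap (Ioo_mem_nhdsGT hw.1)] with x hx
  have hxw : x < w := EReal.coe_lt_coe_iff.1 hx.2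
  exact ⟨⟨hx.1, (EReal.coe_lt_coe_iff.2 hxw).trans hw.2⟩, hxw.le⟩

lemma eventually_comap_coe_nhdsLT_mem_strip (hw : w ∈ strip a b) :
    ∀ᶠ x in comap ((↑) : ℝ → EReal) (𝓝[<] b), x ∈ strip a b ∩ Ici w := by
  filter_upwards [preimage_mem_comap (Ioo_mem_nhdsLT hw.2)] with x hx
  have hwx : w < x := EReal.coe_lt_coe_iff.1 hx.1
  exact ⟨⟨hw.1.trans (EReal.coe_lt_coe_iff.2 hwx), hx.2⟩, hwx.le⟩

end StripEnds

lemma nonneg_of_forall_div_sq_le {T : Set ℝ} {L : Filter ℝ} [L.NeBot]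
    (hT : ∀ᶠ x in L, x ∈ T) {u g ℓ : ℝ → ℝ} {w : ℝ} (hgw : g w ≠ 0)
    (hdiv : ∀ x ∈ T, u x / g x ^ 2 ≤ u w / g w ^ 2) (hsq : ∀ x ∈ T, g w ^ 2 ≤ g x ^ 2)
    (hℓ : ∀ x ∈ T, ℓ x ≤ u x) (hlim : Tendsto ℓ L (𝓝 0)) : 0 ≤ u w := by
  by_contra! huw
  have hgw2 : 0 < g w ^ 2 := by positivity
  have hle : ∀ x ∈ T, u x ≤ u w := fun x hx => by
    have hgx2 : 0 < g x ^ 2 := hgw2.trans_le (hsq x hx)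
    calc u x = u x / g x ^ 2 * g x ^ 2 := (div_mul_cancel₀ _ hgx2.ne').symm
      _ ≤ u w / g w ^ 2 * g x ^ 2 := mul_le_mul_of_nonneg_right (hdiv x hx) hgx2.le
      _ ≤ u w / g w ^ 2 * g w ^ 2 :=
        mul_le_mul_of_nonpos_left (hsq x hx) (div_neg_of_neg_of_pos huw hgw2).le
      _ = u w := div_mul_cancel₀ _ hgw2.ne'
  obtain ⟨x, hxT, hx⟩ := (hT.and (hlim.eventually (eventually_gt_nhds huw))).exists
  exact (hx.trans_le ((hℓ x hxT).trans (hle x hxT))).false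

section Numerator

variable {g p K : ℝ → ℝ} {s x : ℝ}

noncomputable def steinNumer (g p K : ℝ → ℝ) (s x : ℝ) : ℝ :=
  (deriv g x + g x ^ 2) * K x + s * (g x * p x)

lemma hasDerivAt_gMul_div (hg : DifferentiableAt ℝ g x) (hp : HasDerivAt p (-(g x * p x)) x)
    (hK : HasDerivAt K (s * p x) x) (hp0 : p x ≠ 0) :
    HasDerivAt (fun y => g y * K y / p y) (steinNumer g p K s x / p x) x := by
  refine ((hg.hasDerivAt.fun_mul hK).fun_div hp hp0).congr_deriv ?_
  unfold steinNumer
  field_simp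
  ring

lemma hasDerivAt_steinNumer (hg : DifferentiableAt ℝ g x)
    (hg' : DifferentiableAt ℝ (deriv g) x) (hp : HasDerivAt p (-(g x * p x)) x)
    (hK : HasDerivAt K (s * p x) x) :
    HasDerivAt (steinNumer g p K s)
      ((deriv (deriv g) x + 2 * g x * deriv g x) * K x + 2 * s * deriv g x * p x) x := by
  refine (((hg'.hasDerivAt.fun_add (hg.hasDerivAt.fun_pow 2)).fun_mul hK).fun_add
    ((hg.hasDerivAt.fun_mul hp).const_mul s)).congr_deriv ?_
  ring

lemma hasDerivAt_steinNumer_div_sq (hg : DifferentiableAt ℝ g x)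
    (hg' : DifferentiableAt ℝ (deriv g) x) (hp : HasDerivAt p (-(g x * p x)) x)
    (hK : HasDerivAt K (s * p x) x) (hg0 : g x ≠ 0) :
    HasDerivAt (fun y => steinNumer g p K s y / g y ^ 2)
      (K x * (g x * deriv (deriv g) x - 2 * deriv g x ^ 2) / g x ^ 3) x := by
  refine ((hasDerivAt_steinNumer hg hg' hp hK).fun_div (hg.hasDerivAt.fun_pow 2)
    (pow_ne_zero 2 hg0)).congr_deriv ?_
  unfold steinNumer
  field_simp
  ring

end Numerator

section Strip

variable {a b : EReal} {g p K : ℝ → ℝ} {s w : ℝ}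

lemma monotoneOn_steinNumer_div_sq (hg : MonotoneOn g (strip a b))
    (hg_diff : ∀ x ∈ strip a b, DifferentiableAt ℝ g x)
    (hg'_diff : ∀ x ∈ strip a b, DifferentiableAt ℝ (deriv g) x)
    (hg_ineq : ∀ x ∈ strip a b, 0 ≤ 2 * (deriv g x) ^ 2 - g x * deriv (deriv g) x)
    (hp : ∀ x ∈ strip a b, HasDerivAt p (-(g x * p x)) x)
    (hK : ∀ x ∈ strip a b, HasDerivAt K (s * p x) x) (hK0 : ∀ x ∈ strip a b, 0 ≤ K x)
    (hw : w ∈ strip a b) (hgw : g w < 0) :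
    MonotoneOn (fun y => steinNumer g p K s y / g y ^ 2) (strip a b ∩ Iic w) := by
  have hneg : ∀ x ∈ strip a b ∩ Iic w, g x < 0 := fun x hx => (hg hx.1 hw hx.2).trans_lt hgw
  have hderiv := fun x (hx : x ∈ strip a b ∩ Iic w) => hasDerivAt_steinNumer_div_sq
    (hg_diff x hx.1) (hg'_diff x hx.1) (hp x hx.1) (hK x hx.1) (hneg x hx).ne
  refine monotoneOn_of_hasDerivWithinAt_nonneg
    ((ordConnected_strip a b).inter ordConnected_Iic).convex
    (fun x hx => (hderiv x hx).continuousAt.continuousWithinAt)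
    (fun x hx => (hderiv x (interior_subset hx)).hasDerivWithinAt) fun x hx => ?_
  replace hx := interior_subset hx
  exact div_nonneg_of_nonpos
    (mul_nonpos_of_nonneg_of_nonpos (hK0 x hx.1) (by linarith [hg_ineq x hx.1]))
    (Odd.pow_neg (by decide) (hneg x hx)).le

lemma antitoneOn_steinNumer_div_sq (hg : MonotoneOn g (strip a b))
    (hg_diff : ∀ x ∈ strip a b, DifferentiableAt ℝ g x)
    (hg'_diff : ∀ x ∈ strip a b, DifferentiableAt ℝ (deriv g) x)
    (hg_ineq : ∀ x ∈ strip a b, 0 ≤ 2 * (deriv g x) ^ 2 - g x * deriv (deriv g) x)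
    (hp : ∀ x ∈ strip a b, HasDerivAt p (-(g x * p x)) x)
    (hK : ∀ x ∈ strip a b, HasDerivAt K (s * p x) x) (hK0 : ∀ x ∈ strip a b, 0 ≤ K x)
    (hw : w ∈ strip a b) (hgw : 0 < g w) :
    AntitoneOn (fun y => steinNumer g p K s y / g y ^ 2) (strip a b ∩ Ici w) := by
  have hpos : ∀ x ∈ strip a b ∩ Ici w, 0 < g x := fun x hx => hgw.trans_le (hg hw hx.1 hx.2)
  have hderiv := fun x (hx : x ∈ strip a b ∩ Ici w) => hasDerivAt_steinNumer_div_sq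
    (hg_diff x hx.1) (hg'_diff x hx.1) (hp x hx.1) (hK x hx.1) (hpos x hx).ne'
  refine antitoneOn_of_hasDerivWithinAt_nonpos
    ((ordConnected_strip a b).inter ordConnected_Ici).convex
    (fun x hx => (hderiv x hx).continuousAt.continuousWithinAt)
    (fun x hx => (hderiv x (interior_subset hx)).hasDerivWithinAt) fun x hx => ?_
  replace hx := interior_subset hx
  exact div_nonpos_of_nonpos_of_nonneg
    (mul_nonpos_of_nonneg_of_nonpos (hK0 x hx.1) (by linarith [hg_ineq x hx.1]))
    (pow_pos (hpos x hx) 3).le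

lemma steinNumer_nonneg (hg : MonotoneOn g (strip a b))
    (hg_diff : ∀ x ∈ strip a b, DifferentiableAt ℝ g x)
    (hg'_diff : ∀ x ∈ strip a b, DifferentiableAt ℝ (deriv g) x)
    (hg_ineq : ∀ x ∈ strip a b, 0 ≤ 2 * (deriv g x) ^ 2 - g x * deriv (deriv g) x)
    (hp : ∀ x ∈ strip a b, HasDerivAt p (-(g x * p x)) x)
    (hK : ∀ x ∈ strip a b, HasDerivAt K (s * p x) x) (hK0 : ∀ x ∈ strip a b, 0 ≤ K x)
    (hlim_a : Tendsto (fun y => g y * p y) (comap ((↑) : ℝ → EReal) (𝓝[>] a)) (𝓝 0))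
    (hlim_b : Tendsto (fun y => g y * p y) (comap ((↑) : ℝ → EReal) (𝓝[<] b)) (𝓝 0))
    (hw : w ∈ strip a b) : 0 ≤ steinNumer g p K s w := by
  have hg' : ∀ x ∈ strip a b, 0 ≤ deriv g x := fun x hx => by
    rw [← derivWithin_of_isOpen (isOpen_strip a b) hx]
    exact hg.derivWithin_nonneg
  have hlower : ∀ x ∈ strip a b, s * (g x * p x) ≤ steinNumer g p K s x := fun x hx =>
    le_add_of_nonneg_left (mul_nonneg (add_nonneg (hg' x hx) (sq_nonneg _)) (hK0 x hx))
  rcases lt_trichotomy (g w) 0 with hgw | hgw | hgw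
  · have := comap_coe_nhdsGT_neBot hw.1
    refine nonneg_of_forall_div_sq_le (eventually_comap_coe_nhdsGT_mem_strip hw) hgw.ne
      (fun x hx => monotoneOn_steinNumer_div_sq hg hg_diff hg'_diff hg_ineq hp hK hK0 hw hgw
        hx ⟨hw, self_mem_Iic⟩ hx.2)
      (fun x hx => by nlinarith [hg hx.1 hw hx.2]) (fun x hx => hlower x hx.1) ?_
    simpa using hlim_a.const_mul s
  · simpa [steinNumer, hgw] using mul_nonneg (hg' w hw) (hK0 w hw)
  · have := comap_coe_nhdsLT_neBot hw.2
    refine nonneg_of_forall_div_sq_le (eventually_comap_coe_nhdsLT_mem_strip hw) hgw.ne'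
      (fun x hx => antitoneOn_steinNumer_div_sq hg hg_diff hg'_diff hg_ineq hp hK hK0 hw hgw
        ⟨hw, self_mem_Ici⟩ hx hx.2)
      (fun x hx => by nlinarith [hg hw hx.1 hx.2]) (fun x hx => hlower x hx.1) ?_
    simpa using hlim_b.const_mul s

lemma monotoneOn_gMul_div (hg : MonotoneOn g (strip a b))
    (hg_diff : ∀ x ∈ strip a b, DifferentiableAt ℝ g x)
    (hg'_diff : ∀ x ∈ strip a b, DifferentiableAt ℝ (deriv g) x)
    (hg_ineq : ∀ x ∈ strip a b, 0 ≤ 2 * (deriv g x) ^ 2 - g x * deriv (deriv g) x)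
    (hp : ∀ x ∈ strip a b, HasDerivAt p (-(g x * p x)) x) (hp0 : ∀ x ∈ strip a b, 0 < p x)
    (hK : ∀ x ∈ strip a b, HasDerivAt K (s * p x) x) (hK0 : ∀ x ∈ strip a b, 0 ≤ K x)
    (hlim_a : Tendsto (fun y => g y * p y) (comap ((↑) : ℝ → EReal) (𝓝[>] a)) (𝓝 0))
    (hlim_b : Tendsto (fun y => g y * p y) (comap ((↑) : ℝ → EReal) (𝓝[<] b)) (𝓝 0)) :
    MonotoneOn (fun y => g y * K y / p y) (strip a b) := by
  have hderiv := fun x (hx : x ∈ strip a b) =>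
    hasDerivAt_gMul_div (hg_diff x hx) (hp x hx) (hK x hx) (hp0 x hx).ne'
  refine monotoneOn_of_hasDerivWithinAt_nonneg (ordConnected_strip a b).convex
    (fun x hx => (hderiv x hx).continuousAt.continuousWithinAt)
    (fun x hx => (hderiv x (interior_subset hx)).hasDerivWithinAt) fun x hx => ?_
  replace hx := interior_subset hx
  exact div_nonneg (steinNumer_nonneg hg hg_diff hg'_diff hg_ineq hp hK hK0 hlim_a hlim_b hx)
    (hp0 x hx).le

end Strip

section SteinDistribution

variable {a b : EReal} {g : ℝ → ℝ} {w₀ c₁ : ℝ}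

lemma steinPdf_pos (hc₁ : 0 < c₁) (y : ℝ) : 0 < steinPdf g w₀ c₁ y :=
  mul_pos hc₁ (Real.exp_pos _)

lemma hasDerivAt_steinPdf (hw₀ : w₀ ∈ strip a b) (hgc : ContinuousOn g (strip a b)) {w : ℝ}
    (hw : w ∈ strip a b) :
    HasDerivAt (steinPdf g w₀ c₁) (-(g w * steinPdf g w₀ c₁ w)) w := by
  have hG : HasDerivAt (fun y => ∫ t in w₀..y, g t) (g w) w :=
    intervalIntegral.integral_hasDerivAt_right
      (hgc.mono ((ordConnected_strip a b).uIcc_subset hw₀ hw)).intervalIntegrable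
      (hgc.stronglyMeasurableAtFilter (isOpen_strip a b) w hw)
      (hgc.continuousAt ((isOpen_strip a b).mem_nhds hw))
  refine (hG.fun_neg.exp.const_mul c₁).congr_deriv ?_
  simp only [steinPdf]
  ring

lemma integrableOn_steinPdf (hnorm : ∫ y in strip a b, steinPdf g w₀ c₁ y = 1) :
    IntegrableOn (steinPdf g w₀ c₁) (strip a b) := by
  by_contra h
  rw [integral_undef h] at hnorm
  exact zero_ne_one hnorm

lemma steinCDF_eq_integral_indicator (w : ℝ) :
    steinCDF g a b w₀ c₁ w =
      ∫ y in Iic w, (strip a b).indicator (steinPdf g w₀ c₁) y := by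
  rw [steinCDF, setIntegral_indicator (isOpen_strip a b).measurableSet, inter_comm]

lemma hasDerivAt_steinCDF (hw₀ : w₀ ∈ strip a b) (hgc : ContinuousOn g (strip a b))
    (hnorm : ∫ y in strip a b, steinPdf g w₀ c₁ y = 1) {w : ℝ} (hw : w ∈ strip a b) :
    HasDerivAt (steinCDF g a b w₀ c₁) (steinPdf g w₀ c₁ w) w := by
  set q := (strip a b).indicator (steinPdf g w₀ c₁)
  have hq : Integrable q :=
    (integrableOn_steinPdf hnorm).integrable_indicator (isOpen_strip a b).measurableSet
  have hF :
      steinCDF g a b w₀ c₁ = fun x => steinCDF g a b w₀ c₁ w + ∫ y in w..x, q y := by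
    funext x
    rw [steinCDF_eq_integral_indicator, steinCDF_eq_integral_indicator,
      ← intervalIntegral.integral_Iic_sub_Iic hq.integrableOn hq.integrableOn]
    ring
  have hqw : q =ᶠ[𝓝 w] steinPdf g w₀ c₁ := by
    filter_upwards [(isOpen_strip a b).mem_nhds hw] with x hx using indicator_of_mem hx _
  rw [hF]
  exact ((intervalIntegral.integral_hasDerivAt_right hq.intervalIntegrable
    hq.aestronglyMeasurable.stronglyMeasurableAtFilter
    ((hasDerivAt_steinPdf hw₀ hgc hw).continuousAt.congr hqw.symm)).const_add _).congr_deriv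
    (indicator_of_mem hw _)

lemma steinCDF_nonneg (hc₁ : 0 < c₁) (w : ℝ) : 0 ≤ steinCDF g a b w₀ c₁ w :=
  setIntegral_nonneg ((isOpen_strip a b).measurableSet.inter measurableSet_Iic)
    fun y _ => (steinPdf_pos hc₁ y).le

lemma steinCDF_le_one (hc₁ : 0 < c₁) (hnorm : ∫ y in strip a b, steinPdf g w₀ c₁ y = 1)
    (w : ℝ) : steinCDF g a b w₀ c₁ w ≤ 1 :=
  hnorm ▸ setIntegral_mono_set (integrableOn_steinPdf hnorm)
    (Eventually.of_forall fun y => (steinPdf_pos hc₁ y).le) inter_subset_left.eventuallyLE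

lemma gMul_steinSol_of_le {z w : ℝ} (h : w ≤ z) :
    g w * steinSol g a b w₀ c₁ z w = (1 - steinCDF g a b w₀ c₁ z) *
      (g w * steinCDF g a b w₀ c₁ w / steinPdf g w₀ c₁ w) := by
  rw [steinSol, if_pos h]
  ring

lemma gMul_steinSol_of_ge {z w : ℝ} (h : z ≤ w) :
    g w * steinSol g a b w₀ c₁ z w = steinCDF g a b w₀ c₁ z *
      (g w * (1 - steinCDF g a b w₀ c₁ w) / steinPdf g w₀ c₁ w) := by
  rcases h.eq_or_lt with rfl | hlt
  · rw [gMul_steinSol_of_le le_rfl]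
    ring
  · rw [steinSol, if_neg hlt.not_ge]
    ring

end SteinDistribution

theorem steinSol_gMul_monotone_general
    (a b : EReal) (g : ℝ → ℝ) (w₀ c₁ : ℝ)
    (hw₀ : w₀ ∈ strip a b) (hc₁ : 0 < c₁)
    (hnorm : ∫ y in strip a b, steinPdf g w₀ c₁ y = 1)
    -- condition (A1)
    (hg_mono : MonotoneOn g (strip a b))
    -- condition (A2)
    (hg_diff : ∀ w ∈ strip a b, DifferentiableAt ℝ g w)
    (hg'_diff : ∀ w ∈ strip a b, DifferentiableAt ℝ (deriv g) w)
    (hg_ineq : ∀ w ∈ strip a b, 0 ≤ 2 * (deriv g w) ^ 2 - g w * deriv (deriv g) w)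
    -- condition (A3)
    (hlim_a : Tendsto (fun y => g y * steinPdf g w₀ c₁ y)
      (Filter.comap (fun x : ℝ => (x : EReal)) (nhdsWithin a (Set.Ioi a))) (nhds 0))
    (hlim_b : Tendsto (fun y => g y * steinPdf g w₀ c₁ y)
      (Filter.comap (fun x : ℝ => (x : EReal)) (nhdsWithin b (Set.Iio b))) (nhds 0))
    (z : ℝ) (hz : z ∈ strip a b) :
    MonotoneOn (fun w => g w * steinSol g a b w₀ c₁ z w) (strip a b) := by
  set p := steinPdf g w₀ c₁
  set F := steinCDF g a b w₀ c₁
  have hgc : ContinuousOn g (strip a b) := fun w hw =>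
    (hg_diff w hw).continuousAt.continuousWithinAt
  have hp : ∀ x ∈ strip a b, HasDerivAt p (-(g x * p x)) x := fun x hx =>
    hasDerivAt_steinPdf hw₀ hgc hx
  have hp0 : ∀ x ∈ strip a b, 0 < p x := fun x _ => steinPdf_pos hc₁ x
  have hF : ∀ x ∈ strip a b, HasDerivAt F (1 * p x) x := fun x hx =>
    (hasDerivAt_steinCDF hw₀ hgc hnorm hx).congr_deriv (one_mul _).symm
  have hF0 : ∀ x, 0 ≤ F x := steinCDF_nonneg hc₁
  have hF1 : ∀ x, F x ≤ 1 := steinCDF_le_one hc₁ hnorm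
  have hφ := monotoneOn_gMul_div hg_mono hg_diff hg'_diff hg_ineq hp hp0 hF (fun x _ => hF0 x)
    hlim_a hlim_b
  have hψ := monotoneOn_gMul_div (s := -1) hg_mono hg_diff hg'_diff hg_ineq hp hp0
    (fun x hx => (hF x hx).const_sub 1 |>.congr_deriv (by ring))
    (fun x _ => sub_nonneg.2 (hF1 x)) hlim_a hlim_b
  rw [← inter_univ (strip a b), ← Iic_union_Ici (a := z), inter_union_distrib_left]
  refine MonotoneOn.union_right (c := z) (fun x hx y hy hxy => ?_) (fun x hx y hy hxy => ?_)
    ⟨⟨hz, self_mem_Iic⟩, fun _ h => h.2⟩ ⟨⟨hz, self_mem_Ici⟩, fun _ h => h.2⟩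
  · rw [gMul_steinSol_of_le hx.2, gMul_steinSol_of_le hy.2]
    exact mul_le_mul_of_nonneg_left (hφ hx.1 hy.1 hxy) (sub_nonneg.2 (hF1 z))
  · rw [gMul_steinSol_of_ge hx.2, gMul_steinSol_of_ge hy.2]
    exact mul_le_mul_of_nonneg_left (hψ hx.1 hy.1 hxy) (hF0 z)

/-- Lemma 4.1, (4.6): `w ↦ g(w) f_z(w)` is non-decreasing on `(a,b)`. -/
theorem steinSol_gMul_monotone
    (a b : EReal) (hab : a < b) (g : ℝ → ℝ) (w₀ c₁ : ℝ)
    (hw₀ : w₀ ∈ strip a b) (hc₁ : 0 < c₁)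
    (hnorm : ∫ y in strip a b, steinPdf g w₀ c₁ y = 1)
    -- condition (A1)
    (hg_mono : MonotoneOn g (strip a b))
    (hg_sign : ∀ w ∈ strip a b, 0 ≤ (w - w₀) * g w)
    -- condition (A2)
    (hg_diff : ∀ w ∈ strip a b, DifferentiableAt ℝ g w)
    (hg'_diff : ∀ w ∈ strip a b, DifferentiableAt ℝ (deriv g) w)
    (hg'_cont : ContinuousOn (deriv g) (strip a b))
    (hg_ineq : ∀ w ∈ strip a b, 0 ≤ 2 * (deriv g w) ^ 2 - g w * deriv (deriv g) w)
    -- condition (A3)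
    (hlim_a : Tendsto (fun y => g y * steinPdf g w₀ c₁ y)
      (Filter.comap (fun x : ℝ => (x : EReal)) (nhdsWithin a (Set.Ioi a))) (nhds 0))
    (hlim_b : Tendsto (fun y => g y * steinPdf g w₀ c₁ y)
      (Filter.comap (fun x : ℝ => (x : EReal)) (nhdsWithin b (Set.Iio b))) (nhds 0))
    (z : ℝ) (hz : z ∈ strip a b) :
    MonotoneOn (fun w => g w * steinSol g a b w₀ c₁ z w) (strip a b) :=
  steinSol_gMul_monotone_general a b g w₀ c₁ hw₀ hc₁ hnorm hg_mono hg_diff hg'_diff hg_ineq hlim_a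
    hlim_b z hz
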